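/- arXiv:1604.00288 — 2 statements merged into one kernel-verified Lean document; each statement's English description precedes it below -/
import Mathlib

section
/- Let c ∈ ℝ and k₀ > 0 satisfy k₀⁴ − k₀² − c = 0, set X₂ := 16k₀⁴ − 4k₀² − c and X₃ := 81k₀⁴ − 9k₀² − c, assume X₂ ≠ 0 and X₃ ≠ 0, let p₁(z) := 1/4 − (c/(4X₂))·cos(2z), and let κ ∈ ℝ satisfy κ·(4k₀³ − 2k₀) = −c/4 + c²/(8X₂) (κ plays the role of the wavenumber correction k₂). Then the function p₂(z) := (c²/(8X₂X₃))·cos(3z) satisfies k₀⁴ p₂''''(z) + k₀² p₂''(z) − c·p₂(z) + c·cos(z)·p₁(z) + κ·(4k₀³ − 2k₀)·cos(z) = 0 for all z ∈ ℝ. -/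
open Real

/-!
`𝓛₀` acts on `cos (m z)` as multiplication by its symbol `m⁴k₀⁴ − m²k₀² − c`, which is `X₃` at
`m = 3`; hence `𝓛₀p₂ = (c²/(8X₂)) cos 3z`. Since `cos z · cos 2z = (cos 3z + cos z)/2`, the forcing
`c cos z · p₁` contributes `−(c²/(8X₂)) cos 3z`, cancelling it, plus a resonant `cos z` term, which
the wavenumber correction `κ` is chosen to cancel.
-/

lemma iteratedDeriv_even_const_mul_cos_mul (n : ℕ) (A m z : ℝ) :
    iteratedDeriv (2 * n) (fun z => A * cos (m * z)) z = (-m ^ 2) ^ n * (A * cos (m * z)) := by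
  rw [iteratedDeriv_const_mul_field, iteratedDeriv_comp_const_mul contDiff_cos,
    iteratedDeriv_even_cos]
  simp only [Pi.mul_apply, Pi.pow_apply, Pi.neg_apply, Pi.one_apply]
  rw [neg_pow (m ^ 2), ← pow_mul]
  ring

/-- The paper's `𝓛₀`, at wavenumber `k`. -/
noncomputable def profileOperator (k c : ℝ) (u : ℝ → ℝ) (z : ℝ) : ℝ :=
  k ^ 4 * iteratedDeriv 4 u z + k ^ 2 * iteratedDeriv 2 u z - c * u z

lemma profileOperator_const_mul_cos_mul (k c A m z : ℝ) :
    profileOperator k c (fun z => A * cos (m * z)) z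
      = (m ^ 4 * k ^ 4 - m ^ 2 * k ^ 2 - c) * (A * cos (m * z)) := by
  have h₂ := iteratedDeriv_even_const_mul_cos_mul 1 A m z
  have h₄ := iteratedDeriv_even_const_mul_cos_mul 2 A m z
  simp only [mul_one, Nat.reduceMul] at h₂ h₄
  rw [profileOperator, h₂, h₄]
  ring

lemma cos_mul_cos_two_mul (z : ℝ) : cos z * cos (2 * z) = (cos (3 * z) + cos z) / 2 := by
  rw [cos_three_mul, cos_two_mul]
  ring

theorem order_a3_profile_equation_general (c k₀ : ℝ)
    (X₂ X₃ : ℝ)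
    (hX₃ : X₃ = 81 * k₀ ^ 4 - 9 * k₀ ^ 2 - c)
    (hX₃ne : X₃ ≠ 0)
    (p₁ : ℝ → ℝ) (hp₁ : p₁ = fun z => 1/4 - (c / (4 * X₂)) * Real.cos (2 * z))
    (κ : ℝ) (hκ : κ * (4 * k₀ ^ 3 - 2 * k₀) = -c / 4 + c ^ 2 / (8 * X₂))
    (p₂ : ℝ → ℝ) (hp₂ : p₂ = fun z => (c ^ 2 / (8 * X₂ * X₃)) * Real.cos (3 * z)) :
    ∀ z : ℝ, k₀ ^ 4 * iteratedDeriv 4 p₂ z + k₀ ^ 2 * iteratedDeriv 2 p₂ z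
      - c * p₂ z + c * Real.cos z * p₁ z
      + κ * (4 * k₀ ^ 3 - 2 * k₀) * Real.cos z = 0 := by
  intro z
  have h𝓛₀p₂ : k₀ ^ 4 * iteratedDeriv 4 p₂ z + k₀ ^ 2 * iteratedDeriv 2 p₂ z - c * p₂ z
      = c ^ 2 / (8 * X₂) * cos (3 * z) := by
    rw [← profileOperator, hp₂, profileOperator_const_mul_cos_mul,
      show (3 : ℝ) ^ 4 * k₀ ^ 4 - 3 ^ 2 * k₀ ^ 2 - c = X₃ by rw [hX₃]; ring]
    field_simp
  rw [h𝓛₀p₂, hκ, hp₁]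
  linear_combination -(c ^ 2 / (4 * X₂)) * cos_mul_cos_two_mul z

/-- The order-`a³` equation of the small-amplitude expansion of the periodic wave:
`p₂(z) = (c²/(8X₂X₃)) cos(3z)` satisfies `𝓛₀p₂ + c cos·p₁ + κ(4k₀³ − 2k₀)cos = 0`,
where `κ` is the wavenumber correction `k₂`. -/
theorem order_a3_profile_equation (c k₀ : ℝ) (hk₀pos : 0 < k₀)
    (hdisp : k₀ ^ 4 - k₀ ^ 2 - c = 0)
    (X₂ X₃ : ℝ) (hX₂ : X₂ = 16 * k₀ ^ 4 - 4 * k₀ ^ 2 - c)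
    (hX₃ : X₃ = 81 * k₀ ^ 4 - 9 * k₀ ^ 2 - c)
    (hX₂ne : X₂ ≠ 0) (hX₃ne : X₃ ≠ 0)
    (p₁ : ℝ → ℝ) (hp₁ : p₁ = fun z => 1/4 - (c / (4 * X₂)) * Real.cos (2 * z))
    (κ : ℝ) (hκ : κ * (4 * k₀ ^ 3 - 2 * k₀) = -c / 4 + c ^ 2 / (8 * X₂))
    (p₂ : ℝ → ℝ) (hp₂ : p₂ = fun z => (c ^ 2 / (8 * X₂ * X₃)) * Real.cos (3 * z)) :
    ∀ z : ℝ, k₀ ^ 4 * iteratedDeriv 4 p₂ z + k₀ ^ 2 * iteratedDeriv 2 p₂ z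
      - c * p₂ z + c * Real.cos z * p₁ z
      + κ * (4 * k₀ ^ 3 - 2 * k₀) * Real.cos z = 0 :=
  order_a3_profile_equation_general c k₀ X₂ X₃ hX₃ hX₃ne p₁ hp₁ κ hκ p₂ hp₂
end

section
/- Let c ∈ ℝ and k₀ > 0 satisfy k₀⁴ − k₀² − c = 0, set X₂ := 16k₀⁴ − 4k₀² − c, assume X₂ ≠ 0, let k₂ ∈ ℝ satisfy k₂·(4k₀³ − 2k₀) = −c/4 + c²/(8X₂), and define ψ₁(z) := −(c/(2X₂))·cos(2z) and the function g(z) := (c·(1/4 − (c/(4X₂))·cos(2z)))·cos(z) + 2k₀k₂·(2k₀²·(cos)''''(z) + (cos)''(z)) (that is, g = 𝓛₂ cos with 𝓛₂ = c(1/4 − (c/(4X₂))cos 2z) + 2k₀k₂(2k₀²∂_z⁴ + ∂_z²)). If ν₂ ∈ ℝ and a smooth 2π-periodic function ψ₂ : ℝ → ℝ satisfy d²/dz²( k₀⁴ ψ₂'''' + k₀² ψ₂'' − c·ψ₂ )(z) + d²/dz²( c·cos(z)·ψ₁(z) ) + g''(z) = ν₂·cos(z) for all z ∈ ℝ, then ν₂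 = c²/(4X₂). In particular, if also c ≠ 0 and X₂ > 0, then ν₂ > 0. -/
/-!
Pair the equation with `cos` over one period. On smooth `2π`-periodic functions `∂_z²` is
symmetric and `∂_z² cos = -cos`, so pairing `∂_z² f` with `cos` gives `-∫ f cos`. By the same
symmetry `∫ (𝓛₀ψ₂) cos = (k₀⁴ - k₀² - c) ∫ ψ₂ cos`, which vanishes by the dispersion relation, so
`ψ₂` drops out. What is left is the explicit integral of `(c cos ψ₁ + g) cos`, in which the
choice of `k₂` cancels the constant part of `g`; it equals `-π c²/(4X₂)`, while `ν₂ cos`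
contributes `π ν₂`.
-/

open Real Function intervalIntegral
open scoped ContDiff

theorem Function.Periodic.iteratedDeriv {𝕜 F : Type*} [NontriviallyNormedField 𝕜]
    [NormedAddCommGroup F] [NormedSpace 𝕜 F] {f : 𝕜 → F} {T : 𝕜} (h : Periodic f T)
    (n : ℕ) : Periodic (iteratedDeriv n f) T := fun x => by
  rw [← congrFun (iteratedDeriv_comp_add_const n f T) x,
    show (fun z => f (z + T)) = f from funext h]

theorem integral_deriv_mul_eq_neg_of_periodic {u v : ℝ → ℝ} {T : ℝ}
    (hu : ContDiff ℝ 1 u) (hv : ContDiff ℝ 1 v) (hup : Periodic u T) (hvp : Periodic v T) :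
    ∫ x in 0..T, deriv u x * v x = -∫ x in 0..T, u x * deriv v x := by
  have hbdry : u T * v T - u 0 * v 0 = 0 := by
    rw [← zero_add T, hup, hvp]; ring
  rw [integral_mul_deriv_eq_deriv_mul (fun x _ => (hu.differentiable one_ne_zero x).hasDerivAt)
    (fun x _ => (hv.differentiable one_ne_zero x).hasDerivAt)
    ((hu.continuous_deriv le_rfl).intervalIntegrable _ _)
    ((hv.continuous_deriv le_rfl).intervalIntegrable _ _), hbdry]
  ring

theorem integral_iteratedDeriv_two_mul_eq_of_periodic {u v : ℝ → ℝ} {T : ℝ}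
    (hu : ContDiff ℝ 2 u) (hv : ContDiff ℝ 2 v) (hup : Periodic u T) (hvp : Periodic v T) :
    ∫ x in 0..T, iteratedDeriv 2 u x * v x = ∫ x in 0..T, u x * iteratedDeriv 2 v x := by
  have hup' : Periodic (deriv u) T := by simpa using hup.iteratedDeriv 1
  have hvp' : Periodic (deriv v) T := by simpa using hvp.iteratedDeriv 1
  simp only [iteratedDeriv_succ, iteratedDeriv_zero]
  rw [integral_deriv_mul_eq_neg_of_periodic hu.deriv' (hv.of_le one_le_two) hup' hvp,
    integral_deriv_mul_eq_neg_of_periodic (hu.of_le one_le_two) hv.deriv' hup hvp', neg_neg]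

theorem iteratedDeriv_two_cos : iteratedDeriv 2 cos = -cos := by
  simp

theorem iteratedDeriv_four_cos : iteratedDeriv 4 cos = cos := by
  simp

theorem periodic_cos_two_mul : Periodic (fun x => cos (2 * x)) (2 * π) := fun x => by
  dsimp only
  rw [mul_add, show 2 * (2 * π) = 2 * π + 2 * π by ring, ← add_assoc, cos_add_two_pi,
    cos_add_two_pi]

theorem integral_cos_sq_zero_two_pi : ∫ x in 0..2 * π, cos x ^ 2 = π := by
  simp [integral_cos_sq]

theorem integral_add_mul_cos_two_mul_mul_cos_mul_cos (α β : ℝ) :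
    ∫ x in 0..2 * π, (α + β * cos (2 * x)) * cos x * cos x = (α + β / 2) * π := by
  have hF : ∀ x, HasDerivAt (fun x => (α / 2 + β / 4) * x + (α + β) / 4 * sin (2 * x)
      + β / 16 * sin (4 * x)) ((α + β * cos (2 * x)) * cos x * cos x) x := fun x => by
    refine ((((hasDerivAt_id x).const_mul (α / 2 + β / 4)).add
      ((((hasDerivAt_id x).const_mul 2).sin).const_mul ((α + β) / 4))).add
      ((((hasDerivAt_id x).const_mul 4).sin).const_mul (β / 16))).congr_deriv ?_
    simp only [id, mul_one]
    rw [show 4 * x = 2 * (2 * x) by ring, cos_two_mul (2 * x), cos_two_mul x]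
    ring
  have h2 : sin (2 * (2 * π)) = 0 := by simpa using sin_periodic.nat_mul_eq 2
  have h4 : sin (4 * (2 * π)) = 0 := by simpa using sin_periodic.nat_mul_eq 4
  rw [integral_eq_sub_of_hasDerivAt (fun x _ => hF x)
    (Continuous.intervalIntegrable (by fun_prop) _ _), h2, h4]
  simp only [mul_zero, sin_zero]
  ring

theorem integral_iteratedDeriv_two_mul_cos {f : ℝ → ℝ} (hf : ContDiff ℝ 2 f)
    (hfp : Periodic f (2 * π)) :
    ∫ x in 0..2 * π, iteratedDeriv 2 f x * cos x = -∫ x in 0..2 * π, f x * cos x := by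
  rw [integral_iteratedDeriv_two_mul_eq_of_periodic hf contDiff_cos hfp cos_periodic,
    iteratedDeriv_two_cos, ← integral_neg]
  simp

theorem integral_mul_cos_eq_of_iteratedDeriv_two_eq {f : ℝ → ℝ} {ν : ℝ} (hf : ContDiff ℝ 2 f)
    (hfp : Periodic f (2 * π)) (heq : ∀ z, iteratedDeriv 2 f z = ν * cos z) :
    ∫ x in 0..2 * π, f x * cos x = -(ν * π) := by
  have h := integral_iteratedDeriv_two_mul_cos hf hfp
  simp_rw [heq, mul_assoc, ← sq, integral_const_mul, integral_cos_sq_zero_two_pi] at h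
  linarith

/-- `𝓛₀ = fourthOrderOp (k₀ ^ 4) (k₀ ^ 2) c`. -/
noncomputable def fourthOrderOp (a b c : ℝ) (ψ : ℝ → ℝ) (w : ℝ) : ℝ :=
  a * iteratedDeriv 4 ψ w + b * iteratedDeriv 2 ψ w - c * ψ w

theorem ContDiff.fourthOrderOp {ψ : ℝ → ℝ} (hψ : ContDiff ℝ ∞ ψ) (a b c : ℝ) :
    ContDiff ℝ ∞ (fourthOrderOp a b c ψ) := by
  have h : ∀ n, ContDiff ℝ ∞ (iteratedDeriv n ψ) := fun n => by
    rw [iteratedDeriv_eq_iterate]; exact hψ.iterate_deriv n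
  have := h 4; have := h 2
  unfold _root_.fourthOrderOp
  fun_prop

theorem Function.Periodic.fourthOrderOp {ψ : ℝ → ℝ} {T : ℝ} (hψ : Periodic ψ T) (a b c : ℝ) :
    Periodic (fourthOrderOp a b c ψ) T := fun x => by
  simp only [_root_.fourthOrderOp, hψ.iteratedDeriv 4 x, hψ.iteratedDeriv 2 x, hψ x]

theorem integral_fourthOrderOp_mul_cos {ψ : ℝ → ℝ} (hψ : ContDiff ℝ 4 ψ)
    (hψp : Periodic ψ (2 * π)) (a b c : ℝ) :
    ∫ x in 0..2 * π, fourthOrderOp a b c ψ x * cos x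
      = (a - b - c) * ∫ x in 0..2 * π, ψ x * cos x := by
  have h2 : ContDiff ℝ 2 (iteratedDeriv 2 ψ) := by
    rw [iteratedDeriv_eq_iterate]; exact hψ.iterate_deriv' 2 2
  have h4 : iteratedDeriv 4 ψ = iteratedDeriv 2 (iteratedDeriv 2 ψ) := by
    simp only [iteratedDeriv_eq_iterate, ← iterate_add_apply]
  have hψ2 := integral_iteratedDeriv_two_mul_cos (hψ.of_le (by norm_num)) hψp
  have hψ4 := integral_iteratedDeriv_two_mul_cos h2 (hψp.iteratedDeriv 2)
  rw [← h4, hψ2, neg_neg] at hψ4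
  have := hψ.continuous_iteratedDeriv 4 le_rfl
  have := hψ.continuous_iteratedDeriv 2 (by norm_num)
  have := hψ.continuous
  simp only [fourthOrderOp, add_mul, sub_mul, mul_assoc]
  rw [integral_sub, integral_add, integral_const_mul, integral_const_mul, integral_const_mul,
    hψ2, hψ4]
  · ring
  all_goals exact Continuous.intervalIntegrable (by fun_prop) _ _

theorem order_a2_solvability_general (c k₀ : ℝ)
    (hdisp : k₀ ^ 4 - k₀ ^ 2 - c = 0)
    (X₂ : ℝ)
    (k₂ : ℝ) (hk₂ : k₂ * (4 * k₀ ^ 3 - 2 * k₀) = -c / 4 + c ^ 2 / (8 * X₂))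
    (ψ₁ : ℝ → ℝ) (hψ₁ : ψ₁ = fun z => -(c / (2 * X₂)) * Real.cos (2 * z))
    (g : ℝ → ℝ)
    (hg : g = fun z => (c * (1/4 - (c / (4 * X₂)) * Real.cos (2 * z))) * Real.cos z
      + 2 * k₀ * k₂ * (2 * k₀ ^ 2 * iteratedDeriv 4 Real.cos z
        + iteratedDeriv 2 Real.cos z))
    (ν₂ : ℝ) (ψ₂ : ℝ → ℝ)
    (hψ₂smooth : ContDiff ℝ (⊤:ℕ∞) ψ₂)
    (hψ₂per : ∀ z, ψ₂ (z + 2 * Real.pi) = ψ₂ z)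
    (heq : ∀ z : ℝ,
      iteratedDeriv 2
        (fun w => k₀ ^ 4 * iteratedDeriv 4 ψ₂ w + k₀ ^ 2 * iteratedDeriv 2 ψ₂ w
          - c * ψ₂ w) z
      + iteratedDeriv 2 (fun w => c * Real.cos w * ψ₁ w) z
      + iteratedDeriv 2 g z = ν₂ * Real.cos z) :
    ν₂ = c ^ 2 / (4 * X₂) ∧ (c ≠ 0 → 0 < X₂ → 0 < ν₂) := by
  subst hψ₁ hg
  simp only [iteratedDeriv_four_cos, iteratedDeriv_two_cos, Pi.neg_apply] at heq
  set F := fourthOrderOp (k₀ ^ 4) (k₀ ^ 2) c ψ₂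
  set α := c / 4 + k₂ * (4 * k₀ ^ 3 - 2 * k₀)
  set β := -(3 * c ^ 2 / (4 * X₂))
  set P := fun x => (α + β * cos (2 * x)) * cos x
  have hF : ContDiff ℝ 2 F := (hψ₂smooth.fourthOrderOp _ _ _).of_le (by norm_cast)
  have hP : ContDiff ℝ 2 P := by fun_prop
  have hPp : Periodic P (2 * π) := fun x => by
    simp only [P, cos_periodic x, periodic_cos_two_mul x]
  have hsum := integral_mul_cos_eq_of_iteratedDeriv_two_eq (f := F + P) (hF.add hP)
    ((Periodic.fourthOrderOp hψ₂per _ _ _).add hPp) fun z => by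
      rw [iteratedDeriv_add hF.contDiffAt hP.contDiffAt, ← heq z, add_assoc]
      congr 1
      rw [← iteratedDeriv_add (by fun_prop) (by fun_prop)]
      congr 1; ext x; simp only [P, α, β, Pi.add_apply]; ring
  have hFc := hF.continuous
  simp only [Pi.add_apply, add_mul (F _)] at hsum
  rw [integral_add (Continuous.intervalIntegrable (by fun_prop) _ _)
    (Continuous.intervalIntegrable (by fun_prop) _ _),
    integral_fourthOrderOp_mul_cos (hψ₂smooth.of_le (by norm_cast)) hψ₂per, hdisp, zero_mul,
    zero_add, integral_add_mul_cos_two_mul_mul_cos_mul_cos] at hsum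
  simp only [α, β, hk₂] at hsum
  have hν : ν₂ = c ^ 2 / (4 * X₂) := mul_right_cancel₀ pi_ne_zero (by linear_combination hsum)
  exact ⟨hν, fun hc hX₂ => hν ▸ by positivity⟩

/-- The order-`a²` solvability condition of the eigenvalue expansion: if `ψ₂` is a
smooth 2π-periodic solution of
`∂_z²𝓛₀ψ₂ + ∂_z²(c cos·ψ₁) + g'' = ν₂ cos`, where `g = 𝓛₂ cos`, then
`ν₂ = c²/(4X₂)`; in particular `ν₂ > 0` when `c ≠ 0` and `X₂ > 0`. -/
theorem order_a2_solvability (c k₀ : ℝ) (hk₀pos : 0 < k₀)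
    (hdisp : k₀ ^ 4 - k₀ ^ 2 - c = 0)
    (X₂ : ℝ) (hX₂ : X₂ = 16 * k₀ ^ 4 - 4 * k₀ ^ 2 - c) (hX₂ne : X₂ ≠ 0)
    (k₂ : ℝ) (hk₂ : k₂ * (4 * k₀ ^ 3 - 2 * k₀) = -c / 4 + c ^ 2 / (8 * X₂))
    (ψ₁ : ℝ → ℝ) (hψ₁ : ψ₁ = fun z => -(c / (2 * X₂)) * Real.cos (2 * z))
    (g : ℝ → ℝ)
    (hg : g = fun z => (c * (1/4 - (c / (4 * X₂)) * Real.cos (2 * z))) * Real.cos z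
      + 2 * k₀ * k₂ * (2 * k₀ ^ 2 * iteratedDeriv 4 Real.cos z
        + iteratedDeriv 2 Real.cos z))
    (ν₂ : ℝ) (ψ₂ : ℝ → ℝ)
    (hψ₂smooth : ContDiff ℝ (⊤:ℕ∞) ψ₂)
    (hψ₂per : ∀ z, ψ₂ (z + 2 * Real.pi) = ψ₂ z)
    (heq : ∀ z : ℝ,
      iteratedDeriv 2
        (fun w => k₀ ^ 4 * iteratedDeriv 4 ψ₂ w + k₀ ^ 2 * iteratedDeriv 2 ψ₂ w
          - c * ψ₂ w) z
      + iteratedDeriv 2 (fun w => c * Real.cos w * ψ₁ w) z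
      + iteratedDeriv 2 g z = ν₂ * Real.cos z) :
    ν₂ = c ^ 2 / (4 * X₂) ∧ (c ≠ 0 → 0 < X₂ → 0 < ν₂) :=
  order_a2_solvability_general c k₀ hdisp X₂ k₂ hk₂ ψ₁ hψ₁ g hg ν₂ ψ₂ hψ₂smooth hψ₂per heq
end
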